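/- arXiv:0708.0437 — 3 statements merged into one kernel-verified Lean document; each statement's English description precedes it below -/
import Mathlib

section
/- For every nonnegative integer l, the empirical observability Gramian of a stable LTI system satisfies ‖W_o − W_oe(l)‖ ≤ ‖A^l‖² ‖W_o‖. -/
/-!
Shifting the summation index by `l` shows that the tail of the Gramian series is the
congruence `(A^l)* W_o A^l` of the whole Gramian, whose norm is at most `‖A^l‖² ‖W_o‖`
since `‖M*‖ = ‖M‖`. Convergence of the series comes from Gelfand's formula: `ρ(A) < r < 1`
forces `‖A^i‖ ≤ r^i` for large `i`.
-/

open scoped Matrix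

open scoped Matrix.Norms.L2Operator

open Filter

theorem tsum_star_pow_mul_mul_pow_sub_sum_range {R : Type*} [Ring R] [StarRing R]
    [TopologicalSpace R] [IsTopologicalRing R] [T2Space R] {a x : R}
    (hsum : Summable fun i => star (a ^ i) * x * a ^ i) (l : ℕ) :
    (∑' i, star (a ^ i) * x * a ^ i) - ∑ i ∈ Finset.range l, star (a ^ i) * x * a ^ i
      = star (a ^ l) * (∑' i, star (a ^ i) * x * a ^ i) * a ^ l := by
  rw [mul_assoc (star (a ^ l)), ← hsum.tsum_mul_right, ← (hsum.mul_right _).tsum_mul_left]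
  refine sub_eq_of_eq_add' ((hsum.sum_add_tsum_nat_add l).symm.trans ?_)
  simp only [pow_add, star_mul, mul_assoc]

theorem norm_star_mul_mul_le {E : Type*} [NormedRing E] [StarRing E] [NormedStarGroup E]
    (b x : E) : ‖star b * x * b‖ ≤ ‖b‖ ^ 2 * ‖x‖ :=
  calc ‖star b * x * b‖ ≤ ‖star b‖ * ‖x‖ * ‖b‖ := norm_mul₃_le
    _ = ‖b‖ ^ 2 * ‖x‖ := by rw [norm_star]; ring

section SpectralRadius

variable {A : Type*} [NormedRing A] [NormedAlgebra ℂ A] [CompleteSpace A]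

theorem eventually_norm_pow_le_of_spectralRadius_lt {a : A} {r : ℝ}
    (h : spectralRadius ℂ a < ENNReal.ofReal r) :
    ∀ᶠ n : ℕ in atTop, ‖a ^ n‖ ≤ r ^ n := by
  filter_upwards
    [(spectrum.pow_norm_pow_one_div_tendsto_nhds_spectralRadius a).eventually_lt_const h,
      eventually_ne_atTop 0] with n hn hn0
  rw [ENNReal.ofReal_lt_ofReal_iff', one_div] at hn
  calc ‖a ^ n‖ = (‖a ^ n‖ ^ (n : ℝ)⁻¹) ^ n :=
        (Real.rpow_inv_natCast_pow (norm_nonneg _) hn0).symm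
    _ ≤ r ^ n := by gcongr; exact hn.1.le

theorem summable_star_pow_mul_mul_pow [StarRing A] [NormedStarGroup A] {a : A}
    (ha : spectralRadius ℂ a < 1) (x : A) : Summable fun i => star (a ^ i) * x * a ^ i := by
  obtain ⟨r, hr0, har, hr1⟩ := ENNReal.lt_iff_exists_real_btwn.mp ha
  have hr1' : r < 1 := by simpa using hr1
  refine .of_norm_bounded_eventually_nat
    ((summable_geometric_of_lt_one (r := r ^ 2) (by positivity) (by nlinarith)).mul_left ‖x‖) ?_
  filter_upwards [eventually_norm_pow_le_of_spectralRadius_lt har] with i hi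
  calc ‖star (a ^ i) * x * a ^ i‖ ≤ ‖a ^ i‖ ^ 2 * ‖x‖ := norm_star_mul_mul_le _ _
    _ ≤ (r ^ i) ^ 2 * ‖x‖ := by gcongr
    _ = ‖x‖ * (r ^ 2) ^ i := by ring

end SpectralRadius

theorem lti_empirical_observability_gramian_error_bound_general
    (n q : ℕ)
    (A : Matrix (Fin n) (Fin n) ℂ)
    (C : Matrix (Fin q) (Fin n) ℂ)
    (hstab : spectralRadius ℂ A < 1) (l : ℕ) :
    ‖(∑' i : ℕ, (A ^ i)ᴴ * Cᴴ * C * A ^ i) - ∑ i ∈ Finset.range l, (A ^ i)ᴴ * Cᴴ * C * A ^ i‖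
      ≤ ‖A ^ l‖ ^ 2 * ‖∑' i : ℕ, (A ^ i)ᴴ * Cᴴ * C * A ^ i‖ := by
  have hterm (i : ℕ) : (A ^ i)ᴴ * Cᴴ * C * A ^ i = star (A ^ i) * (Cᴴ * C) * A ^ i := by
    rw [Matrix.star_eq_conjTranspose, Matrix.mul_assoc _ Cᴴ C]
  simp only [hterm]
  rw [tsum_star_pow_mul_mul_pow_sub_sum_range (summable_star_pow_mul_mul_pow hstab _)]
  exact norm_star_mul_mul_le _ _

/-- For a stable LTI system (`ρ(A) < 1`) with observability Gramian
`W_o = ∑_{i=0}^∞ (A^i)* C* C A^i` and empirical observability Gramian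
`W_oe(l) = ∑_{i=0}^{l−1} (A^i)* C* C A^i`, one has `‖W_o − W_oe(l)‖ ≤ ‖A^l‖² ‖W_o‖`,
where `‖·‖` is the operator norm induced by the Euclidean norm. -/
theorem lti_empirical_observability_gramian_error_bound
    (n p q : ℕ) (hn : 1 ≤ n) (hp : 1 ≤ p) (hq : 1 ≤ q)
    (A : Matrix (Fin n) (Fin n) ℂ) (B : Matrix (Fin n) (Fin p) ℂ)
    (C : Matrix (Fin q) (Fin n) ℂ)
    (hstab : spectralRadius ℂ A < 1) (l : ℕ) :
    ‖(∑' i : ℕ, (A ^ i)ᴴ * Cᴴ * C * A ^ i) - ∑ i ∈ Finset.range l, (A ^ i)ᴴ * Cᴴ * C * A ^ i‖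
      ≤ ‖A ^ l‖ ^ 2 * ‖∑' i : ℕ, (A ^ i)ᴴ * Cᴴ * C * A ^ i‖ :=
  lti_empirical_observability_gramian_error_bound_general n q A C hstab l
end

section
/- For every integer j and m = lT with l a nonnegative integer, the empirical observability Gramian of the periodic system satisfies ‖W_o(j) − W_oe(j;m)‖ ≤ ‖F(j+T,j)^l‖² ‖W_o(j)‖. -/
open scoped Matrix

noncomputable section

open scoped Matrix.Norms.L2Operator

/-- `transMatAux A d i = A(i+d-1) * ⋯ * A(i)`. -/
def transMatAux {n : ℕ} (A : ℤ → Matrix (Fin n) (Fin n) ℂ) : ℕ → ℤ → Matrix (Fin n) (Fin n) ℂ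
  | 0, _ => 1
  | (d + 1), i => A (i + d) * transMatAux A d i

/-- The state transition matrix `F(j,i) = A(j-1) * A(j-2) * ⋯ * A(i)` for `j ≥ i`,
with `F(i,i) = 1`. -/
def stateTrans {n : ℕ} (A : ℤ → Matrix (Fin n) (Fin n) ℂ) (j i : ℤ) :
    Matrix (Fin n) (Fin n) ℂ :=
  transMatAux A (j - i).toNat i

/-- Controllability Gramian at time `j`:
`W_c(j) = ∑_{i=-∞}^{j-1} F(j,i+1) B(i) B(i)* F(j,i+1)*`, parametrized by `i = j-1-k`, `k : ℕ`. -/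
def Wc {n p : ℕ} (A : ℤ → Matrix (Fin n) (Fin n) ℂ) (B : ℤ → Matrix (Fin n) (Fin p) ℂ)
    (j : ℤ) : Matrix (Fin n) (Fin n) ℂ :=
  ∑' k : ℕ,
    stateTrans A j (j - k) * B (j - 1 - k) * (B (j - 1 - k))ᴴ * (stateTrans A j (j - k))ᴴ

/-- Observability Gramian at time `j`:
`W_o(j) = ∑_{i=j}^{∞} F(i,j)* C(i)* C(i) F(i,j)`, parametrized by `i = j+k`, `k : ℕ`. -/
def Wo {n q : ℕ} (A : ℤ → Matrix (Fin n) (Fin n) ℂ) (C : ℤ → Matrix (Fin q) (Fin n) ℂ)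
    (j : ℤ) : Matrix (Fin n) (Fin n) ℂ :=
  ∑' k : ℕ, (stateTrans A (j + k) j)ᴴ * (C (j + k))ᴴ * C (j + k) * stateTrans A (j + k) j

/-- Empirical controllability Gramian at time `j` over `m` steps:
`W_ce(j;m) = ∑_{i=j-m}^{j-1} F(j,i+1) B(i) B(i)* F(j,i+1)*`, parametrized by `i = j-1-k`. -/
def Wce {n p : ℕ} (A : ℤ → Matrix (Fin n) (Fin n) ℂ) (B : ℤ → Matrix (Fin n) (Fin p) ℂ)
    (j : ℤ) (m : ℕ) : Matrix (Fin n) (Fin n) ℂ :=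
  ∑ k ∈ Finset.range m,
    stateTrans A j (j - k) * B (j - 1 - k) * (B (j - 1 - k))ᴴ * (stateTrans A j (j - k))ᴴ

/-- Empirical observability Gramian at time `j` over `m` steps:
`W_oe(j;m) = ∑_{i=j}^{j+m-1} F(i,j)* C(i)* C(i) F(i,j)`, parametrized by `i = j+k`. -/
def Woe {n q : ℕ} (A : ℤ → Matrix (Fin n) (Fin n) ℂ) (C : ℤ → Matrix (Fin q) (Fin n) ℂ)
    (j : ℤ) (m : ℕ) : Matrix (Fin n) (Fin n) ℂ :=
  ∑ k ∈ Finset.range m,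
    (stateTrans A (j + k) j)ᴴ * (C (j + k))ᴴ * C (j + k) * stateTrans A (j + k) j

/-! Periodicity gives `F(j + i + lT, j) = F(j + i, j) P^l` with `P = F(j + T, j)`, so the
summands `G i` of the observability Gramian satisfy `G (i + lT) = (P^l)* G i P^l`. Hence the
tail `W_o(j) - W_oe(j; lT)` equals `(P^l)* W_o(j) P^l`, whose norm is at most
`‖P^l‖² ‖W_o(j)‖`. Summability of the series is the only analytic input: by Gelfand's formula
`ρ(P) < 1` makes `‖P^m‖²` decay geometrically, and `‖G (r + mT)‖ ≤ ‖P^m‖² ‖G r‖`. -/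

open Filter
open scoped NNReal ENNReal

theorem spectrum.eventually_norm_pow_le {A : Type*} [NormedRing A] [NormedAlgebra ℂ A]
    [CompleteSpace A] (a : A) {r : ℝ≥0} (h : spectralRadius ℂ a < r) :
    ∀ᶠ n : ℕ in atTop, ‖a ^ n‖ ≤ r ^ n := by
  have hgelfand := spectrum.pow_nnnorm_pow_one_div_tendsto_nhds_spectralRadius a
  filter_upwards [hgelfand.eventually_lt_const h, eventually_ne_atTop 0] with n hlt hn
  have hn' : (n : ℝ) ≠ 0 := Nat.cast_ne_zero.mpr hn
  have : (‖a ^ n‖₊ : ℝ≥0∞) ≤ (r : ℝ≥0∞) ^ n :=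
    calc (‖a ^ n‖₊ : ℝ≥0∞) = ((‖a ^ n‖₊ : ℝ≥0∞) ^ (1 / n : ℝ)) ^ (n : ℝ) := by
          rw [← ENNReal.rpow_mul, one_div_mul_cancel hn', ENNReal.rpow_one]
      _ ≤ (r : ℝ≥0∞) ^ (n : ℝ) := ENNReal.rpow_le_rpow hlt.le (Nat.cast_nonneg n)
      _ = (r : ℝ≥0∞) ^ n := ENNReal.rpow_natCast _ _
  exact_mod_cast this

theorem spectrum.summable_norm_pow_sq_of_spectralRadius_lt_one {A : Type*} [NormedRing A]
    [NormedAlgebra ℂ A] [CompleteSpace A] (a : A) (h : spectralRadius ℂ a < 1) :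
    Summable fun n : ℕ => ‖a ^ n‖ ^ 2 := by
  obtain ⟨r, hρr, hr1⟩ := ENNReal.lt_iff_exists_nnreal_btwn.mp h
  have hr1 : (r : ℝ) < 1 := by exact_mod_cast hr1
  refine Summable.of_norm_bounded_eventually_nat
    (summable_geometric_of_lt_one (by positivity) (pow_lt_one₀ r.2 hr1 two_ne_zero)) ?_
  filter_upwards [spectrum.eventually_norm_pow_le a hρr] with n hn
  rw [Real.norm_of_nonneg (by positivity), ← pow_mul, mul_comm, pow_mul]
  exact pow_le_pow_left₀ (norm_nonneg _) hn 2

theorem summable_mul_div_mod {u v : ℕ → ℝ} (hu : Summable u) (hu0 : 0 ≤ u) (hv0 : 0 ≤ v)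
    (T : ℕ) [NeZero T] : Summable fun k => u (k / T) * v (k % T) := by
  have : Summable fun p : ℕ × Fin T => u p.1 * v p.2 :=
    hu.mul_of_nonneg (g := fun r : Fin T => v r) Summable.of_finite hu0 (fun _ => hv0 _)
  simpa [Function.comp_def] using (Nat.divModEquiv T).summable_iff.mpr this

theorem Summable.tsum_sub_sum_range_eq_mul_tsum_mul {R : Type*} [Ring R] [TopologicalSpace R]
    [IsTopologicalRing R] [T2Space R] {f : ℕ → R} (hf : Summable f) {N : ℕ} {X Y : R}
    (hshift : ∀ i, f (i + N) = Y * f i * X) :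
    ∑' i, f i - ∑ i ∈ Finset.range N, f i = Y * (∑' i, f i) * X :=
  calc ∑' i, f i - ∑ i ∈ Finset.range N, f i = ∑' i, f (i + N) := by
        rw [← hf.sum_add_tsum_nat_add N, add_sub_cancel_left]
    _ = Y * (∑' i, f i) * X := by
        simp only [hshift]
        rw [(hf.mul_left Y).tsum_mul_right, hf.tsum_mul_left]

namespace Matrix

theorem l2_opNorm_conjTranspose_mul_mul_le {m : Type*} [Fintype m] [DecidableEq m]
    (X W : Matrix m m ℂ) : ‖Xᴴ * W * X‖ ≤ ‖X‖ ^ 2 * ‖W‖ :=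
  calc ‖Xᴴ * W * X‖ ≤ ‖Xᴴ‖ * ‖W‖ * ‖X‖ := by
        grw [l2_opNorm_mul, l2_opNorm_mul]
    _ = ‖X‖ ^ 2 * ‖W‖ := by rw [l2_opNorm_conjTranspose]; ring

end Matrix

section TransitionMatrix

variable {n : ℕ} (A : ℤ → Matrix (Fin n) (Fin n) ℂ)

theorem transMatAux_add (d e : ℕ) (a : ℤ) :
    transMatAux A (d + e) a = transMatAux A d (a + e) * transMatAux A e a := by
  induction d with
  | zero => simp [transMatAux]
  | succ d ih =>
    rw [Nat.add_right_comm, transMatAux, transMatAux, ih, ← Matrix.mul_assoc]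
    congr 3
    push_cast
    ring

theorem transMatAux_periodic {c : ℤ} (hA : Function.Periodic A c) (d : ℕ) :
    Function.Periodic (transMatAux A d) c := by
  intro a
  induction d with
  | zero => rfl
  | succ d ih => rw [transMatAux, transMatAux, ih, add_right_comm, hA]

theorem transMatAux_mul_eq_pow {T : ℕ} (hA : Function.Periodic A T) (l : ℕ) (a : ℤ) :
    transMatAux A (l * T) a = transMatAux A T a ^ l := by
  induction l with
  | zero => simp [transMatAux]
  | succ l ih =>
    rw [Nat.succ_mul, add_comm, transMatAux_add, pow_succ', ih]
    congr 1
    exact_mod_cast (transMatAux_periodic A hA T).nat_mul l a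

theorem stateTrans_add_natCast (j : ℤ) (k : ℕ) :
    stateTrans A (j + k) j = transMatAux A k j := by
  simp [stateTrans]

end TransitionMatrix

section ObservabilityGramian

variable {n q : ℕ} (A : ℤ → Matrix (Fin n) (Fin n) ℂ) (C : ℤ → Matrix (Fin q) (Fin n) ℂ)

/-- `Wo A C j` is `∑' k, obsGramianTerm A C j k` and `Woe A C j m` its `m`-th partial sum, both
by definition. -/
def obsGramianTerm (j : ℤ) (k : ℕ) : Matrix (Fin n) (Fin n) ℂ :=
  (stateTrans A (j + k) j)ᴴ * (C (j + k))ᴴ * C (j + k) * stateTrans A (j + k) j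

variable {A C} {T : ℕ}

theorem obsGramianTerm_add_mul (hA : Function.Periodic A T) (hC : Function.Periodic C T)
    (j : ℤ) (i l : ℕ) :
    obsGramianTerm A C j (i + l * T) =
      (stateTrans A (j + T) j ^ l)ᴴ * obsGramianTerm A C j i * stateTrans A (j + T) j ^ l := by
  have hshift : j + ((i + l * T : ℕ) : ℤ) = j + i + (l : ℤ) * T := by push_cast; ring
  have hF : transMatAux A i (j + ((l * T : ℕ) : ℤ)) = transMatAux A i j := by
    exact_mod_cast (transMatAux_periodic A hA i).nat_mul l j
  have hCi : C (j + ((i + l * T : ℕ) : ℤ)) = C (j + i) := by rw [hshift]; exact hC.nat_mul l _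
  simp only [obsGramianTerm, stateTrans_add_natCast, transMatAux_add, hF,
    transMatAux_mul_eq_pow A hA, hCi, Matrix.conjTranspose_mul, Matrix.mul_assoc]

theorem summable_obsGramianTerm [NeZero T] (hA : Function.Periodic A T)
    (hC : Function.Periodic C T) {j : ℤ} (hstab : spectralRadius ℂ (stateTrans A (j + T) j) < 1) :
    Summable (obsGramianTerm A C j) := by
  have hbound := summable_mul_div_mod (v := fun r => ‖obsGramianTerm A C j r‖)
    (spectrum.summable_norm_pow_sq_of_spectralRadius_lt_one _ hstab) (fun _ => sq_nonneg _)
    (fun _ => norm_nonneg _) T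
  refine Summable.of_norm_bounded hbound fun k => ?_
  have hk := obsGramianTerm_add_mul hA hC j (k % T) (k / T)
  rw [Nat.mod_add_div'] at hk
  rw [hk]
  exact Matrix.l2_opNorm_conjTranspose_mul_mul_le _ _

end ObservabilityGramian

theorem periodic_empirical_observability_gramian_error_bound_general
    (n q T : ℕ) (hT : 1 ≤ T)
    (A : ℤ → Matrix (Fin n) (Fin n) ℂ)
    (C : ℤ → Matrix (Fin q) (Fin n) ℂ)
    (hA : ∀ k : ℤ, A (k + T) = A k)
    (hC : ∀ k : ℤ, C (k + T) = C k)
    (hstab : ∀ j : ℤ, spectralRadius ℂ (stateTrans A (j + T) j) < 1)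
    (j : ℤ) (l : ℕ) :
    ‖Wo A C j - Woe A C j (l * T)‖ ≤ ‖stateTrans A (j + T) j ^ l‖ ^ 2 * ‖Wo A C j‖ := by
  have : NeZero T := ⟨by omega⟩
  have hsum := summable_obsGramianTerm hA hC (hstab j)
  have htail : Wo A C j - Woe A C j (l * T) =
      (stateTrans A (j + T) j ^ l)ᴴ * Wo A C j * stateTrans A (j + T) j ^ l :=
    hsum.tsum_sub_sum_range_eq_mul_tsum_mul (obsGramianTerm_add_mul hA hC j · l)
  rw [htail]
  exact Matrix.l2_opNorm_conjTranspose_mul_mul_le _ _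

/-- For every integer `j` and `m = lT` with `l` a nonnegative integer,
`‖W_o(j) − W_oe(j;m)‖ ≤ ‖F(j+T,j)^l‖² ‖W_o(j)‖`, where `‖·‖` is the operator norm
induced by the Euclidean norm. -/
theorem periodic_empirical_observability_gramian_error_bound
    (n p q T : ℕ) (hn : 1 ≤ n) (hp : 1 ≤ p) (hq : 1 ≤ q) (hT : 1 ≤ T)
    (A : ℤ → Matrix (Fin n) (Fin n) ℂ) (B : ℤ → Matrix (Fin n) (Fin p) ℂ)
    (C : ℤ → Matrix (Fin q) (Fin n) ℂ)
    (hA : ∀ k : ℤ, A (k + T) = A k) (hB : ∀ k : ℤ, B (k + T) = B k)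
    (hC : ∀ k : ℤ, C (k + T) = C k)
    (hstab : ∀ j : ℤ, spectralRadius ℂ (stateTrans A (j + T) j) < 1)
    (j : ℤ) (l : ℕ) :
    ‖Wo A C j - Woe A C j (l * T)‖ ≤ ‖stateTrans A (j + T) j ^ l‖ ^ 2 * ‖Wo A C j‖ :=
  periodic_empirical_observability_gramian_error_bound_general n q T hT A C hA hC hstab j l
end
end

section
/- Balanced truncation by the method of snapshots exactly balances the empirical Gramians: with Φ = X V Σ^{−1/2} and Ψ = Y U Σ^{−1/2} one has Ψ* Φ = I_a, Ψ* (X X*) Ψ = Σ, and Φ* (Y Y*) Φ = Σ. In particular, when a = n, Φ is invertible with inverse Ψ*, and the transformed controllability Gramian Ψ* (X X*) Ψ and transformed observability Gramian Φ* (Y Y*) Φ are both equal to the diagonal matrix Σ of Hankel singular values. -/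
/-!
Substituting `Yᴴ X = U Σ Vᴴ` and its adjoint `Xᴴ Y = V Σ Uᴴ`, every product collapses through
`Uᴴ U = Vᴴ V = 1`, leaving `W Σ W` and `W Σ Σ W` with `W = Σ^{-1/2}`; both reduce to the fact that
the commuting matrices `W` and `Σ` satisfy `W Σ W = 1`. The observability identity is the
controllability one with `(X, V)` and `(Y, U)` exchanged, and for `a = n` a one-sided inverse of a
square matrix is two-sided.
-/

open scoped Matrix

theorem Real.inv_sqrt_mul_self_mul_inv_sqrt {x : ℝ} (hx : 0 < x) :
    (√x)⁻¹ * x * (√x)⁻¹ = 1 := by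
  have := Real.sqrt_pos.mpr hx
  field_simp
  exact (Real.sq_sqrt hx.le).symm

namespace Matrix

variable {R : Type*} [Semiring R] [StarRing R] {n c o a : Type*} [Fintype n] [Fintype a]
  {X : Matrix n c R} {Y : Matrix n o R} {U : Matrix o a R} {V : Matrix c a R}
  {D W : Matrix a a R}

theorem conjTranspose_mul_eq_of_conjTranspose_mul_eq (hD : D.IsHermitian)
    (hSVD : Yᴴ * X = U * D * Vᴴ) : Xᴴ * Y = V * D * Uᴴ := by
  simpa [conjTranspose_mul, hD.eq, Matrix.mul_assoc] using congrArg conjTranspose hSVD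

variable [Fintype c] [Fintype o] [DecidableEq a]

theorem snapshot_conjTranspose_mul_eq_one (hU : Uᴴ * U = 1) (hV : Vᴴ * V = 1)
    (hSVD : Yᴴ * X = U * D * Vᴴ) (hW : W.IsHermitian) (hWDW : W * D * W = 1) :
    (Y * U * W)ᴴ * (X * V * W) = 1 := by
  calc (Y * U * W)ᴴ * (X * V * W) = W * (Uᴴ * (Yᴴ * X) * V) * W := by
        simp only [conjTranspose_mul, hW.eq, Matrix.mul_assoc]
    _ = W * ((Uᴴ * U) * D * (Vᴴ * V)) * W := by simp only [hSVD, Matrix.mul_assoc]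
    _ = 1 := by rw [hU, hV, Matrix.one_mul, Matrix.mul_one, hWDW]

theorem snapshot_gramian_eq (hU : Uᴴ * U = 1) (hV : Vᴴ * V = 1)
    (hSVD : Yᴴ * X = U * D * Vᴴ) (hD : D.IsHermitian) (hW : W.IsHermitian)
    (hWDW : W * D * W = 1) (hWD : Commute W D) :
    (Y * U * W)ᴴ * (X * Xᴴ) * (Y * U * W) = D := by
  have hXY := conjTranspose_mul_eq_of_conjTranspose_mul_eq hD hSVD
  calc (Y * U * W)ᴴ * (X * Xᴴ) * (Y * U * W) = W * (Uᴴ * (Yᴴ * X) * (Xᴴ * Y) * U) * W := by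
        simp only [conjTranspose_mul, hW.eq, Matrix.mul_assoc]
    _ = W * ((Uᴴ * U) * D * (Vᴴ * V) * D * (Uᴴ * U)) * W := by
        simp only [hSVD, hXY, Matrix.mul_assoc]
    _ = W * D * (D * W) := by
        simp only [hU, hV, Matrix.one_mul, Matrix.mul_one, Matrix.mul_assoc]
    _ = D := by rw [hWD.eq, Matrix.mul_assoc, ← Matrix.mul_assoc W, hWDW, Matrix.mul_one]

end Matrix

theorem balanced_truncation_method_of_snapshots_general
    (n Nc No a : ℕ)
    (X : Matrix (Fin n) (Fin Nc) ℂ) (Y : Matrix (Fin n) (Fin No) ℂ)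
    (U : Matrix (Fin No) (Fin a) ℂ) (V : Matrix (Fin Nc) (Fin a) ℂ)
    (σ : Fin a → ℝ) (hσpos : ∀ k, 0 < σ k)
    (hU : Uᴴ * U = 1) (hV : Vᴴ * V = 1)
    (hSVD : Yᴴ * X = U * Matrix.diagonal (fun k => (σ k : ℂ)) * Vᴴ)
    (S Sinvhalf : Matrix (Fin a) (Fin a) ℂ)
    (hS : S = Matrix.diagonal fun k => (σ k : ℂ))
    (hSinvhalf : Sinvhalf = Matrix.diagonal fun k => ((Real.sqrt (σ k))⁻¹ : ℂ))
    (Φ Ψ : Matrix (Fin n) (Fin a) ℂ)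
    (hΦ : Φ = X * V * Sinvhalf) (hΨ : Ψ = Y * U * Sinvhalf) :
    Ψᴴ * Φ = 1 ∧ Ψᴴ * (X * Xᴴ) * Ψ = S ∧ Φᴴ * (Y * Yᴴ) * Φ = S ∧
      (a = n → Φ * Ψᴴ = 1) := by
  subst hΦ hΨ
  rw [← hS] at hSVD
  have hS_herm : S.IsHermitian :=
    hS ▸ Matrix.isHermitian_diagonal_of_self_adjoint _ (by ext k; simp)
  have hSinvhalf_herm : Sinvhalf.IsHermitian :=
    hSinvhalf ▸ Matrix.isHermitian_diagonal_of_self_adjoint _ (by ext k; simp)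
  have hbalance : Sinvhalf * S * Sinvhalf = 1 := by
    rw [hS, hSinvhalf, Matrix.diagonal_mul_diagonal, Matrix.diagonal_mul_diagonal,
      ← Matrix.diagonal_one]
    congr 1
    ext k
    exact_mod_cast Real.inv_sqrt_mul_self_mul_inv_sqrt (hσpos k)
  have hcomm : Commute Sinvhalf S := hS ▸ hSinvhalf ▸ Matrix.commute_diagonal _ _
  have hdual := Matrix.conjTranspose_mul_eq_of_conjTranspose_mul_eq hS_herm hSVD
  have hbiorth := Matrix.snapshot_conjTranspose_mul_eq_one hU hV hSVD hSinvhalf_herm hbalance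
  refine ⟨hbiorth,
    Matrix.snapshot_gramian_eq hU hV hSVD hS_herm hSinvhalf_herm hbalance hcomm,
    Matrix.snapshot_gramian_eq hV hU hdual hS_herm hSinvhalf_herm hbalance hcomm, ?_⟩
  rintro rfl
  exact mul_eq_one_comm.mp hbiorth

/-- Balanced truncation by the method of snapshots exactly balances the
empirical Gramians: given an SVD-type factorization `Y* X = U Σ V*` with `Σ` diagonal with
real, strictly positive, decreasing diagonal entries and `U* U = V* V = I`, setting
`Φ = X V Σ^{−1/2}` and `Ψ = Y U Σ^{−1/2}` one has `Ψ* Φ = I`, `Ψ* (X X*) Ψ = Σ`, and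
`Φ* (Y Y*) Φ = Σ`; in particular, when `a = n`, `Φ` is invertible with inverse `Ψ*`. -/
theorem balanced_truncation_method_of_snapshots
    (n Nc No a : ℕ) (hn : 1 ≤ n) (hNc : 1 ≤ Nc) (hNo : 1 ≤ No) (ha : 1 ≤ a)
    (X : Matrix (Fin n) (Fin Nc) ℂ) (Y : Matrix (Fin n) (Fin No) ℂ)
    (U : Matrix (Fin No) (Fin a) ℂ) (V : Matrix (Fin Nc) (Fin a) ℂ)
    (σ : Fin a → ℝ) (hσpos : ∀ k, 0 < σ k) (hσanti : Antitone σ)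
    (hU : Uᴴ * U = 1) (hV : Vᴴ * V = 1)
    (hSVD : Yᴴ * X = U * Matrix.diagonal (fun k => (σ k : ℂ)) * Vᴴ)
    (S Sinvhalf : Matrix (Fin a) (Fin a) ℂ)
    (hS : S = Matrix.diagonal fun k => (σ k : ℂ))
    (hSinvhalf : Sinvhalf = Matrix.diagonal fun k => ((Real.sqrt (σ k))⁻¹ : ℂ))
    (Φ Ψ : Matrix (Fin n) (Fin a) ℂ)
    (hΦ : Φ = X * V * Sinvhalf) (hΨ : Ψ = Y * U * Sinvhalf) :
    Ψᴴ * Φ = 1 ∧ Ψᴴ * (X * Xᴴ) * Ψ = S ∧ Φᴴ * (Y * Yᴴ) * Φ = S ∧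
      (a = n → Φ * Ψᴴ = 1) :=
  balanced_truncation_method_of_snapshots_general n Nc No a X Y U V σ hσpos hU hV hSVD S Sinvhalf hS
    hSinvhalf Φ Ψ hΦ hΨ
end
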